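/- arXiv:1810.06530 — 3 statements merged into one kernel-verified Lean document; each statement's English description precedes it below -/
import Mathlib

section
/- Let Q(s,a), for s ranging over a finite set S of states and a over a finite action set A with |A| ≥ 2, be mutually independent real random variables with continuous distributions, such that for each state s all the Q(s,a), a ∈ A, are symmetric about a common constant c_s. Then for any fixed sequence of L state-action pairs (s_1,a_1), ..., (s_L,a_L) with distinct states, the probability that simultaneously for every i the action a_i is the unique argmax of a ↦ Q(s_i, a) is at most 2^{-L}. -/
open MeasureTheory ProbabilityTheory

lemma aux_single {Ω : Type*} [MeasurableSpace Ω] (P : Measure Ω) [IsProbabilityMeasure P]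
    {A : Type*} [Fintype A] (hA : 2 ≤ Fintype.card A)
    (f : A → Ω → ℝ) (hf : ∀ a, Measurable (f a))
    (hprod : ∀ s : A → Set ℝ, (∀ a, MeasurableSet (s a)) →
      P (⋂ a, f a ⁻¹' s a) = ∏ a, P (f a ⁻¹' s a))
    (c : ℝ)
    (hsymm : ∀ a, Measure.map (fun ω => f a ω - c) P = Measure.map (fun ω => c - f a ω) P)
    (b : A) :
    P {ω | ∀ a, a ≠ b → f a ω < f b ω} ≤ 1 / 2 := by
  classical
  set ν : A → Measure ℝ := fun a => P.map (f a) with hν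
  haveI : ∀ a, IsProbabilityMeasure (ν a) := fun a =>
    Measure.isProbabilityMeasure_map (hf a).aemeasurable
  set Φ : Ω → A → ℝ := fun ω a => f a ω with hΦ
  have hΦmeas : Measurable Φ := measurable_pi_lambda _ hf
  have hg : Measurable (fun x : ℝ => 2 * c - x) := measurable_const.sub measurable_id
  have hmap : P.map Φ = Measure.pi ν := by
    refine (Measure.pi_eq fun s hs => ?_).symm
    rw [Measure.map_apply hΦmeas (MeasurableSet.univ_pi hs)]
    have h1 : Φ ⁻¹' Set.pi Set.univ s = ⋂ a, f a ⁻¹' s a := by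
      ext ω; simp [Φ, Set.mem_pi]
    rw [h1, hprod s hs]
    exact Finset.prod_congr rfl fun a _ => (Measure.map_apply (hf a) (hs a)).symm
  have hflip : ∀ a, (ν a).map (fun x => 2 * c - x) = ν a := by
    intro a
    have h1 : (P.map (fun ω => f a ω - c)).map (fun x => x + c) = ν a := by
      rw [Measure.map_map (measurable_add_const c) ((hf a).sub_const c)]
      congr 1
      funext ω; simp [Function.comp]
    have h2 : (P.map (fun ω => c - f a ω)).map (fun x => x + c)
        = P.map (fun ω => 2 * c - f a ω) := by
      rw [Measure.map_map (measurable_add_const c) ((hf a).const_sub c)]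
      congr 1
      funext ω; simp [Function.comp]; ring
    have h3 : P.map (fun ω => 2 * c - f a ω) = (ν a).map (fun x => 2 * c - x) := by
      rw [hν, Measure.map_map hg (hf a)]
      rfl
    rw [← h3, ← h2, ← hsymm a, h1]
  set flip : (A → ℝ) → (A → ℝ) := fun x a => 2 * c - x a with hflipdef
  have hflipmeas : Measurable flip :=
    measurable_pi_lambda _ fun a => (measurable_pi_apply a).const_sub _
  have hpiflip : (Measure.pi ν).map flip = Measure.pi ν := by
    refine (Measure.pi_eq fun s hs => ?_).symm
    rw [Measure.map_apply hflipmeas (MeasurableSet.univ_pi hs)]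
    have h1 : flip ⁻¹' Set.pi Set.univ s
        = Set.pi Set.univ (fun a => (fun x => 2 * c - x) ⁻¹' s a) := by
      ext x; simp [flip, Set.mem_pi]
    rw [h1, Measure.pi_pi]
    refine Finset.prod_congr rfl fun a _ => ?_
    conv_rhs => rw [← hflip a]
    rw [Measure.map_apply hg (hs a)]
  set B : Set (A → ℝ) := {x | ∀ a, a ≠ b → x a < x b} with hBdef
  set B' : Set (A → ℝ) := {x | ∀ a, a ≠ b → x b < x a} with hB'def
  have hB : MeasurableSet B := by
    have : B = ⋂ a, ⋂ (_ : a ≠ b), {x : A → ℝ | x a < x b} := by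
      ext x; simp [hBdef]
    rw [this]
    exact MeasurableSet.iInter fun a => MeasurableSet.iInter fun _ =>
      measurableSet_lt (measurable_pi_apply a) (measurable_pi_apply b)
  have hB' : MeasurableSet B' := by
    have : B' = ⋂ a, ⋂ (_ : a ≠ b), {x : A → ℝ | x b < x a} := by
      ext x; simp [hB'def]
    rw [this]
    exact MeasurableSet.iInter fun a => MeasurableSet.iInter fun _ =>
      measurableSet_lt (measurable_pi_apply b) (measurable_pi_apply a)
  have hBB' : Measure.pi ν B' = Measure.pi ν B := by
    have h0 : (Measure.pi ν).map flip B = Measure.pi ν B := by rw [hpiflip]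
    rw [Measure.map_apply hflipmeas hB] at h0
    have h1 : flip ⁻¹' B = B' := by
      ext x
      simp only [hBdef, hB'def, Set.mem_preimage, Set.mem_setOf_eq, flip]
      exact forall_congr' fun a => imp_congr Iff.rfl (sub_lt_sub_iff_left _)
    rwa [h1] at h0
  have hdisj : Disjoint B B' := by
    obtain ⟨a, ha⟩ := Fintype.exists_ne_of_one_lt_card (lt_of_lt_of_le one_lt_two hA) b
    refine Set.disjoint_left.mpr fun x hx hx' => ?_
    exact lt_asymm (hx a ha) (hx' a ha)
  have hsum : Measure.pi ν B + Measure.pi ν B' ≤ 1 := by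
    rw [← measure_union hdisj hB']
    exact prob_le_one
  rw [hBB'] at hsum
  have hevent : {ω | ∀ a, a ≠ b → f a ω < f b ω} = Φ ⁻¹' B := by
    ext ω; simp [Φ, hBdef]
  rw [hevent, ← Measure.map_apply hΦmeas hB, hmap]
  rw [ENNReal.le_div_iff_mul_le (Or.inl two_ne_zero) (Or.inl ENNReal.ofNat_ne_top), mul_two]
  exact hsum
/-- With mutually independent, continuously distributed Q-values that are
symmetric about a per-state constant `c s`, the probability that a fixed sequence of `L`
state-action pairs (with distinct states) is simultaneously greedy-optimal is at most `2^{-L}`. -/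
theorem stmt1 {Ω : Type*} [MeasurableSpace Ω] (P : Measure Ω) [IsProbabilityMeasure P]
    {S A : Type*} [Fintype S] [Fintype A] (hA : 2 ≤ Fintype.card A)
    (Q : S × A → Ω → ℝ)
    (hmeas : ∀ p, Measurable (Q p))
    (hindep : iIndepFun Q P)
    (c : S → ℝ)
    (hsymm : ∀ s a, Measure.map (fun ω => Q (s, a) ω - c s) P
      = Measure.map (fun ω => c s - Q (s, a) ω) P)
    (hcont : ∀ p (r : ℝ), P {ω | Q p ω = r} = 0)
    (L : ℕ) (sa : Fin L → S × A)
    (hdistinct : Function.Injective (fun i => (sa i).1)) :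
    P {ω | ∀ i : Fin L, ∀ a : A, a ≠ (sa i).2 →
        Q ((sa i).1, a) ω < Q ((sa i).1, (sa i).2) ω} ≤ (1 / 2) ^ L := by
  classical
  set m : S × A → MeasurableSpace Ω :=
    fun p => MeasurableSpace.comap (Q p) inferInstance with hm
  have h_le : ∀ p, m p ≤ ‹MeasurableSpace Ω› := fun p => (hmeas p).comap_le
  have hiI : iIndep m P := hindep.iIndep
  set E : Fin L → Set Ω := fun i =>
    {ω | ∀ a, a ≠ (sa i).2 → Q ((sa i).1, a) ω < Q ((sa i).1, (sa i).2) ω} with hE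
  -- measurability of E i w.r.t. the sigma-algebra of state (sa i).1
  have hQmeas : ∀ (M : MeasurableSpace Ω) (p : S × A), m p ≤ M → Measurable[M] (Q p) :=
    fun M p h => measurable_iff_comap_le.mpr h
  have hEmeas : ∀ (i : Fin L) (M : MeasurableSpace Ω),
      (∀ a, m ((sa i).1, a) ≤ M) → MeasurableSet[M] (E i) := by
    intro i M hM
    have : E i = ⋂ a, ⋂ (_ : a ≠ (sa i).2),
        {ω | Q ((sa i).1, a) ω < Q ((sa i).1, (sa i).2) ω} := by
      ext ω; simp [hE]
    rw [this]
    exact MeasurableSet.iInter fun a => MeasurableSet.iInter fun _ =>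
      measurableSet_lt (hQmeas M _ (hM a)) (hQmeas M _ (hM (sa i).2))
  have key : ∀ T : Finset (Fin L), P (⋂ i ∈ T, E i) = ∏ i ∈ T, P (E i) := by
    intro T
    induction T using Finset.induction with
    | empty => simp
    | @insert i T hiT ih =>
      set S1 : Set (S × A) := Prod.fst ⁻¹' {(sa i).1} with hS1
      set S2 : Set (S × A) := Prod.fst ⁻¹' (↑(T.image fun j => (sa j).1)) with hS2
      have hdisj : Disjoint S1 S2 := by
        refine Set.disjoint_left.mpr fun p hp1 hp2 => ?_
        simp only [hS1, hS2, Set.mem_preimage, Set.mem_singleton_iff, Finset.coe_image,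
          Set.mem_image, Finset.mem_coe] at hp1 hp2
        obtain ⟨j, hjT, hj⟩ := hp2
        have : i = j := hdistinct (by simp [hp1 ▸ hj.symm])
        exact hiT (this ▸ hjT)
      have hInd : Indep (⨆ p ∈ S1, m p) (⨆ p ∈ S2, m p) P :=
        indep_iSup_of_disjoint h_le hiI hdisj
      have h1 : MeasurableSet[⨆ p ∈ S1, m p] (E i) := by
        refine hEmeas i _ fun a => ?_
        exact le_iSup₂ (f := fun p (_ : p ∈ S1) => m p) ((sa i).1, a) rfl
      have h2 : MeasurableSet[⨆ p ∈ S2, m p] (⋂ j ∈ T, E j) := by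
        refine Finset.measurableSet_biInter T fun j hj => ?_
        refine hEmeas j _ fun a => ?_
        refine le_iSup₂ (f := fun p (_ : p ∈ S2) => m p) ((sa j).1, a) ?_
        simp only [hS2, Set.mem_preimage, Finset.coe_image, Set.mem_image, Finset.mem_coe]
        exact ⟨j, hj, rfl⟩
      rw [Finset.set_biInter_insert, (Indep_iff _ _ _).mp hInd _ _ h1 h2, ih,
        Finset.prod_insert hiT]
  have hbound : ∀ i : Fin L, P (E i) ≤ 1 / 2 := by
    intro i
    refine aux_single P hA (fun a ω => Q ((sa i).1, a) ω) (fun a => hmeas _) ?_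
      (c (sa i).1) (fun a => hsymm _ a) (sa i).2
    intro s hs
    have h := hindep.meas_biInter (S := Finset.univ.image fun a => ((sa i).1, a))
      (s := fun p => Q p ⁻¹' s p.2) (fun p _ => ⟨s p.2, hs _, rfl⟩)
    have e1 : (⋂ p ∈ Finset.univ.image fun a => ((sa i).1, a), Q p ⁻¹' s p.2)
        = ⋂ a, Q ((sa i).1, a) ⁻¹' s a := by
      ext ω
      simp only [Set.mem_iInter, Finset.mem_image, Finset.mem_univ, true_and, Set.mem_preimage]
      constructor
      · intro h a; exact h _ ⟨a, rfl⟩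
      · rintro h p ⟨a, rfl⟩; exact h a
    have e2 : (∏ p ∈ Finset.univ.image fun a => ((sa i).1, a), P (Q p ⁻¹' s p.2))
        = ∏ a, P (Q ((sa i).1, a) ⁻¹' s a) := by
      rw [Finset.prod_image]
      intro a _ a' _ h
      exact (Prod.mk.injEq _ _ _ _ ▸ h).2
    rw [e1, e2] at h
    exact h
  have hset : {ω | ∀ i : Fin L, ∀ a : A, a ≠ (sa i).2 →
      Q ((sa i).1, a) ω < Q ((sa i).1, (sa i).2) ω} = ⋂ i ∈ Finset.univ, E i := by
    ext ω; simp [hE]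
  rw [hset, key Finset.univ]
  calc ∏ i : Fin L, P (E i) ≤ ∏ _i : Fin L, (1 / 2 : ENNReal) :=
        Finset.prod_le_prod' fun i _ => hbound i
    _ = (1 / 2) ^ L := by simp
end

section
/- Let v_1, ..., v_d ∈ ℝ^d with ⟨v_d, v_i⟩ > 0 for i = 1,...,d-1. Set κ = max_k ‖v_k‖² > 0 and fix i* maximizing ⟨v_d, v_i⟩ over i ≤ d-1. Then every point of the form x = v_d + Σ_{j=1}^{d-1} α_j v_j with 0 ≤ α_j < ⟨v_d, v_{i*}⟩/(κ(d-1)) satisfies ⟨v_{i*}, x⟩ > 0 and ⟨v_{i*}, R_{v_d}(x)⟩ < 0, where R_{v_d} is reflection across the hyperplane orthogonal to v_d. -/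
/-- let `v 0, ..., v n` in `ℝ^{n+1}` (with `v (Fin.last n)` playing the role
of `v_d`) satisfy `⟨v_d, v_i⟩ > 0` for all `i < d`. Set `κ = max_k ⟨v_k, v_k⟩` and let `i*`
maximize `⟨v_d, v_i⟩` over `i < d`. Then every `x = v_d + ∑_j α_j v_j` with
`0 ≤ α_j < ⟨v_d, v_{i*}⟩ / (κ (d-1))` satisfies `⟨v_{i*}, x⟩ > 0` and
`⟨v_{i*}, R_{v_d} x⟩ < 0`, where `R_{v_d}` is the reflection across the hyperplane
orthogonal to `v_d`. -/
theorem stmt8 (n : ℕ) (v : Fin (n + 1) → (Fin (n + 1) → ℝ))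
    (hpos : ∀ i : Fin n, 0 < ∑ k, v (Fin.last n) k * v i.castSucc k)
    (κ : ℝ) (hκ : κ = Finset.univ.sup' Finset.univ_nonempty (fun k => ∑ l, v k l * v k l))
    (hκpos : 0 < κ)
    (istar : Fin n)
    (histar : ∀ i : Fin n, ∑ k, v (Fin.last n) k * v i.castSucc k
      ≤ ∑ k, v (Fin.last n) k * v istar.castSucc k)
    (R : (Fin (n + 1) → ℝ) → (Fin (n + 1) → ℝ))
    (hR : ∀ x, R x = x - (2 * (∑ k, x k * v (Fin.last n) k) /
      (∑ k, v (Fin.last n) k * v (Fin.last n) k)) • v (Fin.last n))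
    (α : Fin n → ℝ)
    (hα : ∀ j, 0 ≤ α j ∧
      α j < (∑ k, v (Fin.last n) k * v istar.castSucc k) / (κ * n))
    (x : Fin (n + 1) → ℝ)
    (hx : x = v (Fin.last n) + ∑ j : Fin n, α j • v j.castSucc) :
    0 < ∑ k, v istar.castSucc k * x k ∧ ∑ k, v istar.castSucc k * R x k < 0 := by
  have hnpos : 0 < n := istar.pos
  have hn : (0:ℝ) < n := by exact_mod_cast hnpos
  set d := Fin.last n with hd
  set a := ∑ k, v d k * v istar.castSucc k with ha'
  have ha : 0 < a := hpos istar
  have hκle : ∀ i, (∑ l, v i l * v i l) ≤ κ := by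
    intro i; rw [hκ]; exact Finset.le_sup' (fun k => ∑ l, v k l * v k l) (Finset.mem_univ i)
  have hsq0 : ∀ i : Fin (n+1), (0:ℝ) ≤ ∑ l, v i l * v i l :=
    fun i => Finset.sum_nonneg fun l _ => mul_self_nonneg _
  have hCS : ∀ i j : Fin (n+1), (∑ k, v i k * v j k)^2 ≤
      (∑ k, v i k * v i k) * (∑ k, v j k * v j k) := by
    intro i j
    have := Finset.sum_mul_sq_le_sq_mul_sq Finset.univ (fun k => v i k) (fun k => v j k)
    simpa [sq] using this
  have habs : ∀ i j : Fin (n+1), |∑ k, v i k * v j k| ≤ κ := by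
    intro i j
    have h1 := hCS i j
    have h2 := hκle i
    have h3 := hκle j
    have h4 := hsq0 i
    have h5 := hsq0 j
    rw [abs_le]
    constructor <;> nlinarith [sq_nonneg ((∑ k, v i k * v j k) + κ), sq_nonneg ((∑ k, v i k * v j k) - κ)]
  set N := ∑ k, v d k * v d k with hN'
  have hN : 0 < N := by
    have h1 := hCS d istar.castSucc
    have := hκle istar.castSucc
    have := hsq0 istar.castSucc
    have := hsq0 d
    nlinarith
  -- decompose inner products with x
  have key : ∀ u : Fin (n+1) → ℝ, ∑ k, u k * x k =
      (∑ k, u k * v d k) + ∑ j : Fin n, α j * ∑ k, u k * v j.castSucc k := by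
    intro u
    rw [hx]
    have h1 : ∀ k, (v d + ∑ j : Fin n, α j • v j.castSucc) k
        = v d k + ∑ j : Fin n, α j * v j.castSucc k := by
      intro k; simp [Finset.sum_apply]
    simp_rw [h1, mul_add, Finset.sum_add_distrib, Finset.mul_sum]
    rw [Finset.sum_comm]
    congr 1
    apply Finset.sum_congr rfl
    intro j _
    apply Finset.sum_congr rfl
    intro k _
    ring
  set S := ∑ j : Fin n, α j * ∑ k, v istar.castSucc k * v j.castSucc k with hS'
  haveI : Nonempty (Fin n) := ⟨istar⟩
  have hsum : ∑ j : Fin n, α j < a / κ := by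
    have h1 : ∑ j : Fin n, α j < ∑ _j : Fin n, a / (κ * n) :=
      Finset.sum_lt_sum_of_nonempty Finset.univ_nonempty (fun j _ => (hα j).2)
    have h2 : ∑ _j : Fin n, a / (κ * n) = a / κ := by
      rw [Finset.sum_const, Finset.card_univ, Fintype.card_fin, nsmul_eq_mul]
      field_simp
    linarith [h1, h2.le, h2.ge]
  have hSlt : |S| < a := by
    calc |S| ≤ ∑ j : Fin n, |α j * ∑ k, v istar.castSucc k * v j.castSucc k| :=
          Finset.abs_sum_le_sum_abs _ _
      _ ≤ ∑ j : Fin n, α j * κ := by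
          apply Finset.sum_le_sum
          intro j _
          rw [abs_mul, abs_of_nonneg (hα j).1]
          exact mul_le_mul_of_nonneg_left (habs _ _) (hα j).1
      _ = (∑ j : Fin n, α j) * κ := (Finset.sum_mul _ _ _).symm
      _ < (a / κ) * κ := mul_lt_mul_of_pos_right hsum hκpos
      _ = a := div_mul_cancel₀ a (ne_of_gt hκpos)
  have hix : ∑ k, v istar.castSucc k * x k = a + S := by
    rw [key]
    congr 1
    apply Finset.sum_congr rfl
    intro k _
    ring
  have h1 : 0 < ∑ k, v istar.castSucc k * x k := by
    rw [hix]
    have := abs_lt.mp hSlt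
    linarith
  refine ⟨h1, ?_⟩
  -- inner product of x with v_d
  set T := ∑ j : Fin n, α j * ∑ k, v d k * v j.castSucc k with hT'
  have hT : 0 ≤ T := Finset.sum_nonneg fun j _ =>
    mul_nonneg (hα j).1 (hpos j).le
  have hxd : ∑ k, x k * v d k = N + T := by
    have : ∑ k, x k * v d k = ∑ k, v d k * x k := by
      apply Finset.sum_congr rfl; intro k _; ring
    rw [this, key]
  set c := 2 * (∑ k, x k * v d k) / N with hc'
  have hc : 2 ≤ c := by
    rw [hc', hxd, le_div_iff₀ hN]
    nlinarith
  have hRx : ∑ k, v istar.castSucc k * R x k = (a + S) - c * a := by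
    rw [hR x, ← hc']
    have h2 : ∀ k, (x - c • v d) k = x k - c * v d k := by intro k; simp
    simp_rw [h2, mul_sub, Finset.sum_sub_distrib]
    rw [hix]
    congr 1
    rw [Finset.mul_sum]
    apply Finset.sum_congr rfl
    intro k _
    ring
  rw [hRx]
  have hS2 : S < a := (abs_lt.mp hSlt).2
  nlinarith
end

section
/- Let θ, β > 0, ν(n) = (θ^{-1} + β^{-1}n)^{-1}, and let N ≥ 1, and N₁, N₂ integers with 1 ≤ N₂ ≤ N₁ ≤ N and N₁ ≤ (27 + 4√2)N/41. Then ν(N₁) + ν(N₂) + (1/2)ν(N₁ − N₂) > ν(N − N₁). -/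
set_option maxHeartbeats 1000000


/-- for `ν n = (θ⁻¹ + β⁻¹ n)⁻¹` with `θ, β > 0`, `N ≥ 1` and integers
`1 ≤ N₂ ≤ N₁ ≤ N` with `N₁ ≤ (27 + 4√2) N / 41`, we have
`ν N₁ + ν N₂ + (1/2) ν (N₁ - N₂) > ν (N - N₁)`. -/
theorem stmt19 (θ β : ℝ) (hθ : 0 < θ) (hβ : 0 < β)
    (ν : ℕ → ℝ) (hν : ∀ n, ν n = (θ⁻¹ + β⁻¹ * n)⁻¹)
    (N N₁ N₂ : ℕ) (hN : 1 ≤ N) (hN₂ : 1 ≤ N₂) (h₂₁ : N₂ ≤ N₁) (h₁N : N₁ ≤ N)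
    (hbound : (N₁ : ℝ) ≤ (27 + 4 * Real.sqrt 2) * N / 41) :
    ν (N - N₁) < ν N₁ + ν N₂ + (1 / 2) * ν (N₁ - N₂) := by
  set s : ℝ := Real.sqrt 2 with hsdef
  have hs2 : s ^ 2 = 2 := Real.sq_sqrt (by norm_num)
  have hs0 : 0 ≤ s := Real.sqrt_nonneg 2
  have hs1 : 1 ≤ s := by nlinarith
  set u : ℝ := θ⁻¹ with hudef
  set b : ℝ := β⁻¹ with hbdef
  have hu : 0 < u := inv_pos.mpr hθ
  have hb : 0 < b := inv_pos.mpr hβ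
  set m : ℝ := (N₁ : ℝ) with hmdef
  set n : ℝ := (N : ℝ) with hndef
  set k : ℝ := (N₂ : ℝ) with hkdef
  have hk0 : 0 ≤ k := Nat.cast_nonneg _
  have hmk : 0 ≤ m - k := by
    have : (N₂ : ℝ) ≤ (N₁ : ℝ) := Nat.cast_le.mpr h₂₁
    linarith
  have hnm : 0 ≤ n - m := by
    have : (N₁ : ℝ) ≤ (N : ℝ) := Nat.cast_le.mpr h₁N
    linarith
  have hm0 : 0 ≤ m := Nat.cast_nonneg _
  have hcast1 : ((N - N₁ : ℕ) : ℝ) = n - m := by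
    push_cast [Nat.cast_sub h₁N]; ring
  have hcast2 : ((N₁ - N₂ : ℕ) : ℝ) = m - k := by
    push_cast [Nat.cast_sub h₂₁]; ring
  rw [hν, hν, hν, hν, hcast1, hcast2]
  set A : ℝ := u + b * k with hAdef
  set B : ℝ := u + b * (m - k) with hBdef
  set P : ℝ := u + b * m with hPdef
  set R : ℝ := u + b * (n - m) with hRdef
  clear_value s u b m n k A B P R
  have hA : 0 < A := by rw [hAdef]; linarith [mul_nonneg hb.le hk0]
  have hB : 0 < B := by rw [hBdef]; linarith [mul_nonneg hb.le hmk]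
  have hP : 0 < P := by rw [hPdef]; linarith [mul_nonneg hb.le hm0]
  have hR : 0 < R := by rw [hRdef]; linarith [mul_nonneg hb.le hnm]
  have hABQ : A + B = 2 * u + b * m := by rw [hAdef, hBdef]; ring
  have hQp : (0 : ℝ) < 2 * u + b * m := by rw [← hABQ]; linarith
  have hb41 : 41 * m ≤ (27 + 4 * s) * n := by linarith
  have hlin : (7 + 2 * s) * m ≤ (5 + 2 * s) * n := by
    nlinarith [mul_le_mul_of_nonneg_left hb41 (by linarith : (0:ℝ) ≤ 7 + 2 * s)]
  have h5 : 0 ≤ (5 + 2 * s) * (n - m) - 2 * m := by nlinarith [hlin]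
  clear hν hbound hθ hβ hN hN₂ h₂₁ h₁N hcast1 hcast2 hsdef hudef hbdef hmdef hndef hkdef hb41
  -- key1 : (3+2s)/(2(A+B)) ≤ A⁻¹ + (1/2) B⁻¹
  have key1 : (3 + 2 * s) / (2 * (A + B)) ≤ A⁻¹ + (1 / 2) * B⁻¹ := by
    have h1 : A⁻¹ + (1 / 2) * B⁻¹ = (2 * B + A) / (2 * (A * B)) := by
      rw [eq_div_iff (by exact (mul_pos two_pos (mul_pos hA hB)).ne'), add_mul]
      rw [show A⁻¹ * (2 * (A * B)) = (A⁻¹ * A) * (2 * B) by ring,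
          show (1 / 2) * B⁻¹ * (2 * (A * B)) = (B⁻¹ * B) * A by ring,
          inv_mul_cancel₀ hA.ne', inv_mul_cancel₀ hB.ne']
      ring
    rw [h1, div_le_div_iff₀ (by linarith) (mul_pos two_pos (mul_pos hA hB))]
    nlinarith [sq_nonneg (A - s * B), hs2, sq_nonneg B]
  -- key2 : R⁻¹ < P⁻¹ + (3+2s)/(2(A+B))
  have key2 : R⁻¹ < P⁻¹ + (3 + 2 * s) / (2 * (A + B)) := by
    rw [hABQ]
    have hden : (0 : ℝ) < 2 * (P * (2 * u + b * m)) := mul_pos two_pos (mul_pos hP hQp)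
    have h2 : P⁻¹ + (3 + 2 * s) / (2 * (2 * u + b * m))
        = (2 * (2 * u + b * m) + (3 + 2 * s) * P) / (2 * (P * (2 * u + b * m))) := by
      rw [eq_div_iff hden.ne', add_mul]
      rw [show P⁻¹ * (2 * (P * (2 * u + b * m))) = (P⁻¹ * P) * (2 * (2 * u + b * m)) by ring,
          inv_mul_cancel₀ hP.ne']
      rw [div_mul_eq_mul_div,
          show (3 + 2 * s) * (2 * (P * (2 * u + b * m)))
            = ((3 + 2 * s) * P) * (2 * (2 * u + b * m)) by ring,
          mul_div_assoc, div_self (by linarith : (2 * (2 * u + b * m)) ≠ 0), mul_one]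
      ring
    rw [h2, inv_eq_one_div, div_lt_div_iff₀ hR hden, hPdef, hRdef]
    have e1 : 0 < (3 + 2 * s) * (u * u) := by
      apply mul_pos (by linarith) (mul_pos hu hu)
    have e2 : 0 ≤ (7 + 2 * s) * (u * b * (n - m)) := by
      apply mul_nonneg (by linarith) (mul_nonneg (mul_nonneg hu.le hb.le) hnm)
    have e3 : 0 ≤ (2 * s - 1) * (u * b * m) := by
      apply mul_nonneg (by linarith) (mul_nonneg (mul_nonneg hu.le hb.le) hm0)
    have e4 : 0 ≤ b * b * ((5 + 2 * s) * (n - m) - 2 * m) * m :=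
      mul_nonneg (mul_nonneg (mul_nonneg hb.le hb.le) h5) hm0
    nlinarith [e1, e2, e3, e4]
  calc R⁻¹ < P⁻¹ + (3 + 2 * s) / (2 * (A + B)) := key2
    _ ≤ P⁻¹ + (A⁻¹ + (1 / 2) * B⁻¹) := by linarith [key1]
    _ = P⁻¹ + A⁻¹ + (1 / 2) * B⁻¹ := by ring
end
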